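/- Let n be even, g = (a,b) ∈ ℤ₂×ℤ₂, and 1 ≤ p < q ≤ n/2. Then the string order parameter factorizes as an ordered product of cluster stabilizers: S_{[p,q]}(g) = ∏_{j=2p}^{2q−1} K_j^{s_j} (factors in increasing order of j), where s_j = a if j is odd and s_j = b if j is even. In particular, S_{[p,q]}(g) |C_n⟩ = |C_n⟩. -/

import Mathlib

open Matrix Complex
open scoped ComplexOrder

noncomputable section

/-- The state space of `n` qubits, as functions on classical bit strings. -/
abbrev QState (n : ℕ) := (Fin n → Fin 2) → ℂ

/-- Operators on `n` qubits: `2^n × 2^n` complex matrices. -/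
abbrev Op (n : ℕ) := Matrix (Fin n → Fin 2) (Fin n → Fin 2) ℂ

/-- The single-qubit Pauli `X` matrix. -/
def Xmat : Matrix (Fin 2) (Fin 2) ℂ := !![0, 1; 1, 0]

/-- The single-qubit Pauli `Z` matrix. -/
def Zmat : Matrix (Fin 2) (Fin 2) ℂ := !![1, 0; 0, -1]

/-- Map a 1-based cyclic site label `j ∈ {1,…,n}` (taken mod `n`) to an index in `Fin n`. -/
def site (n : ℕ) [NeZero n] (j : ℕ) : Fin n :=
  ⟨(j + (n - 1)) % n, Nat.mod_lt _ (Nat.pos_of_ne_zero (NeZero.ne n))⟩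

/-- The operator acting as the single-qubit matrix `M` on qubit `i` and as identity elsewhere. -/
def onSite (n : ℕ) (i : Fin n) (M : Matrix (Fin 2) (Fin 2) ℂ) : Op n :=
  Matrix.of fun s t => (if ∀ k, k ≠ i → s k = t k then 1 else 0) * M (s i) (t i)

/-- Pauli `X` on (1-based, cyclic) site `j`. -/
def PX (n : ℕ) [NeZero n] (j : ℕ) : Op n := onSite n (site n j) Xmat

/-- Pauli `Z` on (1-based, cyclic) site `j`. -/
def PZ (n : ℕ) [NeZero n] (j : ℕ) : Op n := onSite n (site n j) Zmat

/-- The cyclic cluster stabilizer `K_j = Z_{j-1} X_j Z_{j+1}` (for `1 ≤ j ≤ n`). -/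
def Kstab (n : ℕ) [NeZero n] (j : ℕ) : Op n := PZ n (j - 1) * PX n j * PZ n (j + 1)

/-- The symmetry group `ℤ₂ × ℤ₂`. -/
abbrev G2 := ZMod 2 × ZMod 2

/-- The nontrivial element `x = (0,1)` of `ℤ₂ × ℤ₂`. -/
def gx : G2 := (0, 1)

/-- The nontrivial element `y = (1,0)` of `ℤ₂ × ℤ₂`. -/
def gy : G2 := (1, 0)

/-- The nontrivial element `z = (1,1)` of `ℤ₂ × ℤ₂`. -/
def gz : G2 := (1, 1)

/-- The global symmetry representation `U((a,b)) = ∏_{j odd} X_j^a ∏_{j even} X_j^b`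
on `n` qubits (`n` even), written as a product over the `n/2` two-site blocks. -/
def Usym (n : ℕ) [NeZero n] (g : G2) : Op n :=
  ((List.range (n / 2)).map
    (fun p => PX n (2 * p + 1) ^ g.1.val * PX n (2 * p + 2) ^ g.2.val)).prod

/-- Left boundary operator `V^L_p((a,b))`: `Z^b` on qubit `2p-1` and `X^b Z^a` on qubit `2p`. -/
def VL (n : ℕ) [NeZero n] (p : ℕ) (g : G2) : Op n :=
  PZ n (2 * p - 1) ^ g.2.val * (PX n (2 * p) ^ g.2.val * PZ n (2 * p) ^ g.1.val)

/-- Right boundary operator `V^R_p((a,b))`: `Z^b X^a` on qubit `2p-1` and `Z^a` on qubit `2p`. -/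
def VR (n : ℕ) [NeZero n] (p : ℕ) (g : G2) : Op n :=
  (PZ n (2 * p - 1) ^ g.2.val * PX n (2 * p - 1) ^ g.1.val) * PZ n (2 * p) ^ g.1.val

/-- Truncated symmetry `U_{[p,q]}((a,b)) = ∏_{r=p+1}^{q-1} X_{2r-1}^a X_{2r}^b`. -/
def Ustr (n : ℕ) [NeZero n] (p q : ℕ) (g : G2) : Op n :=
  ((List.range (q - (p + 1))).map
    (fun r => PX n (2 * (p + 1 + r) - 1) ^ g.1.val * PX n (2 * (p + 1 + r)) ^ g.2.val)).prod

/-- The string order parameter `S_{[p,q]}(g) = V^L_p(g) · U_{[p,q]}(g) · V^R_q(g)`. -/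
def SOPm (n : ℕ) [NeZero n] (p q : ℕ) (g : G2) : Op n :=
  VL n p g * Ustr n p q g * VR n q g

/-- The twisted string order parameter
`T_{[p,q]}^{(g,h)} = V^R_q(g) · U(h) · V^L_p(g) · U_{[p,q]}(g)`. -/
def TSOP (n : ℕ) [NeZero n] (p q : ℕ) (g h : G2) : Op n :=
  VR n q g * Usym n h * VL n p g * Ustr n p q g

/-- The triangle-game winning operator
`O_{g,h} = (1/32)(12·1 + 12 U(g) + U(h) + U(gh) − 3T − 3U(g)T)` with `T = T_{[1,n/6+1]}^{(g,h)}`. -/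
def Owin (n : ℕ) [NeZero n] (g h : G2) : Op n :=
  (32 : ℂ)⁻¹ • (12 • (1 : Op n) + 12 • Usym n g + Usym n h + Usym n (g + h)
    - 3 • TSOP n 1 (n / 6 + 1) g h - 3 • (Usym n g * TSOP n 1 (n / 6 + 1) g h))

/-- The `n`-fold tensor product `|+⟩^{⊗n}`, with all amplitudes `(1/√2)^n`. -/
def plusState (n : ℕ) : QState n := fun _ => (((Real.sqrt 2)⁻¹ : ℝ) : ℂ) ^ n

/-- The controlled-`Z` gate between (1-based, cyclic) sites `j` and `k`. -/
def CZm (n : ℕ) [NeZero n] (j k : ℕ) : Op n :=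
  Matrix.of fun s t =>
    if s = t then (if s (site n j) = 1 ∧ s (site n k) = 1 then -1 else 1) else 0

/-- The `n`-qubit cyclic cluster state `|C_n⟩ = (∏_{j=1}^n CZ_{j,j+1}) |+⟩^{⊗n}`. -/
def cluster (n : ℕ) [NeZero n] : QState n :=
  (((List.range n).map (fun j => CZm n (j + 1) (j + 2))).prod).mulVec (plusState n)

/-! Every operator involved is a Pauli string `(-1)^ε X^x Z^z` with `x, z ∈ 𝔽₂ⁿ`, and these
multiply by `(ε, x, z)(ε', x', z') = (ε + ε' + z ⬝ x', x + x', z + z')`. Adjacent strings glue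
because `V^R_q V^L_q = X_{2q-1}^a X_{2q}^b` is exactly the missing block of the string, so
`S_{[p,q]} S_{[q,q+1]} = S_{[p,q+1]}`, while the one-block string `S_{[q,q+1]}` equals
`K_{2q}^b K_{2q+1}^a`; induction on `q` gives the factorization.

The cluster state has amplitude `(-1)^{Σ_r s_r s_{r+1}}` up to a constant. Flipping bit `j` changes
that exponent by `s_{j-1} + s_{j+1}`, which is exactly the phase contributed by `Z_{j-1} Z_{j+1}`,
so every `K_j` with both neighbours inside the chain fixes the cluster state. -/

def signChar : AddChar (ZMod 2) ℂ where
  toFun a := if a = 0 then 1 else -1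
  map_zero_eq_one' := if_pos rfl
  map_add_eq_mul' a b := by
    obtain rfl | rfl : a = 0 ∨ a = 1 := by revert a; decide
    all_goals obtain rfl | rfl : b = 0 ∨ b = 1 := by revert b; decide
    all_goals simp [show (1 : ZMod 2) + 1 = 0 from rfl]

-- `ZMod 2` unfolds to `Fin 2`; these equivalences only switch to the field structure on bits.
def bit : Fin 2 ≃ ZMod 2 := Equiv.refl _

def bits {n : ℕ} : (Fin n → Fin 2) ≃ (Fin n → ZMod 2) := Equiv.refl _

@[simp] theorem bits_apply {n : ℕ} (s : Fin n → Fin 2) (k : Fin n) : bits s k = bit (s k) := rfl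

/-- The Pauli string `(-1)^ε X^x Z^z`. -/
def pauliString (n : ℕ) (ε : ZMod 2) (x z : Fin n → ZMod 2) : Op n :=
  Matrix.of fun s t => if bits s = bits t + x then signChar (ε + z ⬝ᵥ bits t) else 0

section PauliString

variable {n : ℕ}

theorem pauliString_zero : pauliString n 0 0 0 = 1 := by
  ext s t
  simp [pauliString, Matrix.one_apply]

theorem pauliString_mul (ε ε' : ZMod 2) (x z x' z' : Fin n → ZMod 2) :
    pauliString n ε x z * pauliString n ε' x' z'
      = pauliString n (ε + ε' + z ⬝ᵥ x') (x + x') (z + z') := by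
  ext s t
  rw [Matrix.mul_apply, Finset.sum_eq_single (bits.symm (bits t + x'))]
  · simp only [pauliString, Matrix.of_apply, Equiv.apply_symm_apply, if_true,
      add_right_comm _ x' x, add_assoc (bits t) x x']
    split_ifs
    · rw [← AddChar.map_add_eq_mul]
      congr 1
      simp only [dotProduct_add, add_dotProduct]
      ring
    · rw [zero_mul]
  · intro u _ hu
    have : bits u ≠ bits t + x' := fun h => hu (by rw [← h]; rfl)
    simp [pauliString, this]
  · simp

theorem pauliString_pow_val (x z : Fin n → ZMod 2) (c : ZMod 2) :
    pauliString n 0 x z ^ c.val = pauliString n 0 (c • x) (c • z) := by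
  obtain rfl | rfl : c = 0 ∨ c = 1 := by revert c; decide
  · simp [pauliString_zero]
  · simp [show (1 : ZMod 2).val = 1 from rfl]

theorem pauliString_mulVec_apply (ε : ZMod 2) (x z : Fin n → ZMod 2) (ψ : QState n)
    (s : Fin n → Fin 2) :
    (pauliString n ε x z *ᵥ ψ) s
      = signChar (ε + z ⬝ᵥ (bits s + x)) * ψ (bits.symm (bits s + x)) := by
  rw [mulVec, dotProduct, Finset.sum_eq_single (bits.symm (bits s + x))]
  · simp [pauliString, add_assoc, ZModModule.add_self]
  · intro t _ ht
    have : bits s ≠ bits t + x := fun h =>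
      ht (by rw [← bits.symm_apply_apply t, h, add_assoc, ZModModule.add_self, add_zero])
    simp [pauliString, this]
  · simp

theorem bits_eq_add_single_iff {s t : Fin n → Fin 2} {i : Fin n} {c : ZMod 2} :
    bits s = bits t + Pi.single i c ↔ (∀ k ≠ i, s k = t k) ∧ bit (s i) = bit (t i) + c := by
  constructor
  · intro h
    exact ⟨fun k hk => by simpa [Pi.single_eq_of_ne hk] using congrFun h k,
      by simpa using congrFun h i⟩
  · rintro ⟨hne, hi⟩
    funext k
    by_cases hk : k = i
    · subst hk
      simpa using hi
    · simp [Pi.single_eq_of_ne hk, hne k hk]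

theorem onSite_eq_pauliString (i : Fin n) (M : Matrix (Fin 2) (Fin 2) ℂ) (c d : ZMod 2)
    (hM : ∀ a b, M a b = if bit a = bit b + c then signChar (d * bit b) else 0) :
    onSite n i M = pauliString n 0 (Pi.single i c) (Pi.single i d) := by
  ext s t
  simp only [onSite, pauliString, of_apply, bits_eq_add_single_iff, single_dotProduct, zero_add,
    bits_apply, hM]
  by_cases hrest : ∀ k, ¬k = i → s k = t k
  · simp only [eq_true hrest, true_and, if_true, one_mul]
  · simp [hrest]

end PauliString

section Sites

variable {n : ℕ} [NeZero n]

def siteVec (n : ℕ) [NeZero n] (j : ℕ) : Fin n → ZMod 2 := Pi.single (site n j) 1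

theorem site_val {j : ℕ} (h1 : 1 ≤ j) (h2 : j ≤ n) : (site n j).val = j - 1 := by
  rw [site, Fin.val_mk, show j + (n - 1) = j - 1 + n by omega, Nat.add_mod_right]
  exact Nat.mod_eq_of_lt (by omega)

theorem site_add_self : site n (n + 1) = site n 1 := by
  have := NeZero.one_le (n := n)
  ext
  simp only [site, show n + 1 + (n - 1) = n * 2 by omega, show 1 + (n - 1) = n by omega,
    Nat.mul_mod_right, Nat.mod_self]

theorem site_injOn : Set.InjOn (site n) (Set.Icc 1 n) := by
  intro j ⟨hj1, hjn⟩ k ⟨hk1, hkn⟩ h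
  have := congrArg Fin.val h
  rw [site_val hj1 hjn, site_val hk1 hkn] at this
  omega

theorem siteVec_apply_site {j k : ℕ} (hj1 : 1 ≤ j) (hjn : j ≤ n) (hk1 : 1 ≤ k) (hkn : k ≤ n) :
    siteVec n j (site n k) = if k = j then 1 else 0 := by
  by_cases h : k = j
  · simp [siteVec, h]
  · rw [siteVec, Pi.single_apply, if_neg (fun h' => h (site_injOn ⟨hk1, hkn⟩ ⟨hj1, hjn⟩ h')), if_neg h]

@[simp] theorem siteVec_apply_self (j : ℕ) : siteVec n j (site n j) = 1 := Pi.single_eq_same _ _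

theorem siteVec_dotProduct (j : ℕ) (v : Fin n → ZMod 2) : siteVec n j ⬝ᵥ v = v (site n j) := by
  rw [siteVec, single_dotProduct, one_mul]

theorem PX_eq (j : ℕ) : PX n j = pauliString n 0 (siteVec n j) 0 := by
  rw [PX, onSite_eq_pauliString _ _ 1 0
    (fun a b => by fin_cases a <;> fin_cases b <;> simp [Xmat] <;> rfl), Pi.single_zero, siteVec]

theorem PZ_eq (j : ℕ) : PZ n j = pauliString n 0 0 (siteVec n j) := by
  rw [PZ, onSite_eq_pauliString _ _ 0 1
    (fun a b => by fin_cases a <;> fin_cases b <;> simp [Zmat] <;> rfl), Pi.single_zero, siteVec]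

theorem PX_pow_val (j : ℕ) (c : ZMod 2) :
    PX n j ^ c.val = pauliString n 0 (c • siteVec n j) 0 := by
  rw [PX_eq, pauliString_pow_val, smul_zero]

theorem PZ_pow_val (j : ℕ) (c : ZMod 2) :
    PZ n j ^ c.val = pauliString n 0 0 (c • siteVec n j) := by
  rw [PZ_eq, pauliString_pow_val, smul_zero]

theorem Kstab_eq {j : ℕ} (h2 : 2 ≤ j) (hn : j ≤ n) :
    Kstab n j = pauliString n 0 (siteVec n j) (siteVec n (j - 1) + siteVec n (j + 1)) := by
  rw [Kstab, PZ_eq, PX_eq, PZ_eq, pauliString_mul, pauliString_mul]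
  congr 1
  · simp [siteVec_dotProduct, siteVec_apply_site (j := j) (k := j - 1) (by omega) hn (by omega)
      (by omega), show j - 1 ≠ j by omega]
  · abel
  · abel

theorem Kstab_pow_val {j : ℕ} (h2 : 2 ≤ j) (hn : j ≤ n) (c : ZMod 2) :
    Kstab n j ^ c.val
      = pauliString n 0 (c • siteVec n j) (c • (siteVec n (j - 1) + siteVec n (j + 1))) := by
  rw [Kstab_eq h2 hn, pauliString_pow_val]

end Sites

section StringOrder

variable {n : ℕ} [NeZero n]

theorem VL_eq {p : ℕ} (hp : 1 ≤ p) (hpn : 2 * p ≤ n) (g : G2) :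
    VL n p g = pauliString n 0 (g.2 • siteVec n (2 * p))
      (g.2 • siteVec n (2 * p - 1) + g.1 • siteVec n (2 * p)) := by
  rw [VL, PZ_pow_val, PX_pow_val, PZ_pow_val, pauliString_mul, pauliString_mul]
  congr 1
  · simp [siteVec_dotProduct, siteVec_apply_site (j := 2 * p) (k := 2 * p - 1) (by omega) hpn
      (by omega) (by omega), show 2 * p - 1 ≠ 2 * p by omega]
  · abel
  · abel

theorem VR_eq (q : ℕ) (g : G2) :
    VR n q g = pauliString n (g.1 * g.2) (g.1 • siteVec n (2 * q - 1))
      (g.2 • siteVec n (2 * q - 1) + g.1 • siteVec n (2 * q)) := by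
  rw [VR, PZ_pow_val, PX_pow_val, PZ_pow_val, pauliString_mul, pauliString_mul]
  congr 1
  · simp [siteVec, mul_comm]
  · abel
  · abel

theorem VR_mul_VL {q : ℕ} (hq : 1 ≤ q) (hqn : 2 * q ≤ n) (g : G2) :
    VR n q g * VL n q g = PX n (2 * q - 1) ^ g.1.val * PX n (2 * q) ^ g.2.val := by
  rw [VR_eq, VL_eq hq hqn, PX_pow_val, PX_pow_val, pauliString_mul, pauliString_mul]
  congr 1
  · simp only [dotProduct_smul, add_dotProduct, smul_dotProduct, siteVec_dotProduct,
      siteVec_apply_site (j := 2 * q) (k := 2 * q - 1) (by omega) hqn (by omega) (by omega),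
      show 2 * q - 1 ≠ 2 * q by omega, ↓reduceIte, smul_eq_mul, mul_zero, siteVec_apply_self,
      mul_one, zero_add, zero_dotProduct, add_zero]
    rw [mul_comm g.2, ZModModule.add_self]
  · exact ZModModule.add_self _

theorem Ustr_succ {p q : ℕ} (hpq : p < q) (g : G2) :
    Ustr n p (q + 1) g = Ustr n p q g * (PX n (2 * q - 1) ^ g.1.val * PX n (2 * q) ^ g.2.val) := by
  rw [Ustr, Ustr, show q + 1 - (p + 1) = q - (p + 1) + 1 by omega, List.range_succ,
    List.map_append, List.prod_append, List.map_singleton, List.prod_singleton,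
    show p + 1 + (q - (p + 1)) = q by omega]

theorem SOPm_mul_SOPm_succ {p q : ℕ} (hpq : p < q) (hqn : 2 * q ≤ n) (g : G2) :
    SOPm n p q g * SOPm n q (q + 1) g = SOPm n p (q + 1) g := by
  have hU : Ustr n q (q + 1) g = 1 := by simp [Ustr]
  simp only [SOPm, hU, mul_one, Ustr_succ hpq, ← VR_mul_VL (by omega) hqn, mul_assoc]

theorem SOPm_succ_eq {q : ℕ} (hq : 1 ≤ q) (hqn : 2 * q + 2 ≤ n) (g : G2) :
    SOPm n q (q + 1) g = Kstab n (2 * q) ^ g.2.val * Kstab n (2 * q + 1) ^ g.1.val := by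
  have hU : Ustr n q (q + 1) g = 1 := by simp [Ustr]
  rw [SOPm, hU, mul_one, VL_eq hq (by omega), VR_eq, Kstab_pow_val (by omega) (by omega),
    Kstab_pow_val (by omega) (by omega), pauliString_mul, pauliString_mul]
  rw [show 2 * (q + 1) - 1 = 2 * q + 1 by omega, show 2 * (q + 1) = 2 * q + 2 by omega,
    Nat.add_sub_cancel, show 2 * q + 1 + 1 = 2 * q + 2 by omega]
  congr 1
  · simp [siteVec_dotProduct, siteVec_apply_site (n := n) (j := 2 * q + 1) (k := 2 * q - 1)
      (by omega) (by omega) (by omega) (by omega), siteVec_apply_site (n := n) (j := 2 * q + 1)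
      (k := 2 * q) (by omega) (by omega) (by omega) (by omega)]
  · module

theorem SOPm_eq_prod_Kstab {p q : ℕ} (hp : 1 ≤ p) (hpq : p < q)
    (hqn : 2 * q ≤ n) (g : G2) :
    SOPm n p q g = ((List.range (2 * (q - p))).map (fun i => Kstab n (2 * p + i)
      ^ (if (2 * p + i) % 2 = 1 then g.1.val else g.2.val))).prod := by
  induction q, hpq using Nat.le_induction with
  | base =>
    rw [SOPm_succ_eq hp hqn, show 2 * (p.succ - p) = 2 by omega]
    simp [List.range_succ]
  | succ q hpq ih =>
    rw [← SOPm_mul_SOPm_succ hpq (by omega), ih (by omega), SOPm_succ_eq (by omega) hqn,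
      show 2 * (q + 1 - p) = 2 * (q - p) + 1 + 1 by omega, List.range_succ, List.range_succ]
    simp only [List.map_append, List.prod_append, List.map_singleton, List.prod_singleton,
      mul_assoc, show 2 * p + (2 * (q - p) + 1) = 2 * q + 1 by omega,
      show 2 * p + 2 * (q - p) = 2 * q by omega]
    simp

end StringOrder

def mulVecStabilizer {m R : Type*} [Fintype m] [DecidableEq m] [Semiring R] (v : m → R) :
    Submonoid (Matrix m m R) where
  carrier := {A | A *ᵥ v = v}
  one_mem' := one_mulVec v
  mul_mem' {A B} (hA : A *ᵥ v = v) (hB : B *ᵥ v = v) := by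
    show (A * B) *ᵥ v = v
    rw [← mulVec_mulVec, hB, hA]

theorem mem_mulVecStabilizer {m R : Type*} [Fintype m] [DecidableEq m] [Semiring R] {v : m → R}
    {A : Matrix m m R} : A ∈ mulVecStabilizer v ↔ A *ᵥ v = v := Iff.rfl

section Cluster

variable {n : ℕ} [NeZero n]

def clusterPhase (n : ℕ) [NeZero n] (v : Fin n → ZMod 2) : ZMod 2 :=
  ∑ r ∈ Finset.range n, v (site n (r + 1)) * v (site n (r + 2))

theorem signChar_bit_mul (a b : Fin 2) :
    signChar (bit a * bit b) = if a = 1 ∧ b = 1 then -1 else 1 := by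
  fin_cases a <;> fin_cases b <;> rfl

theorem CZm_eq_diagonal (j k : ℕ) :
    CZm n j k = diagonal fun s => signChar (bits s (site n j) * bits s (site n k)) := by
  ext s t
  rw [CZm, of_apply, diagonal_apply, bits_apply, bits_apply, signChar_bit_mul]

theorem prod_CZm_eq_diagonal (m : ℕ) :
    ((List.range m).map fun r => CZm n (r + 1) (r + 2)).prod
      = diagonal fun s => signChar
          (∑ r ∈ Finset.range m, bits s (site n (r + 1)) * bits s (site n (r + 2))) := by
  induction m with
  | zero => simp
  | succ m ih =>
    rw [List.range_succ, List.map_append, List.prod_append, ih, List.map_singleton,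
      List.prod_singleton, CZm_eq_diagonal, diagonal_mul_diagonal]
    simp only [Finset.sum_range_succ, AddChar.map_add_eq_mul]

theorem cluster_apply (s : Fin n → Fin 2) :
    cluster n s = signChar (clusterPhase n (bits s)) * plusState n s := by
  rw [cluster, prod_CZm_eq_diagonal, mulVec_diagonal]
  rfl

theorem pauliString_mem_mulVecStabilizer_cluster {ε : ZMod 2} {x z : Fin n → ZMod 2}
    (h : ∀ v, ε + z ⬝ᵥ (v + x) + clusterPhase n (v + x) = clusterPhase n v) :
    pauliString n ε x z ∈ mulVecStabilizer (cluster n) := by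
  rw [mem_mulVecStabilizer]
  funext s
  rw [pauliString_mulVec_apply, cluster_apply, cluster_apply, ← mul_assoc,
    ← AddChar.map_add_eq_mul, Equiv.apply_symm_apply, h]
  rfl

theorem siteVec_apply_site_add_one {j r : ℕ} (hj : 1 ≤ j) (hjn : j ≤ n) (hr : r < n) :
    siteVec n j (site n (r + 1)) = if r = j - 1 then 1 else 0 := by
  rw [siteVec_apply_site hj hjn (by omega) (by omega)]
  congr 1
  simp only [eq_iff_iff]
  omega

theorem siteVec_apply_site_add_two {j r : ℕ} (hj : 2 ≤ j) (hjn : j + 1 ≤ n) (hr : r < n) :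
    siteVec n j (site n (r + 2)) = if r = j - 2 then 1 else 0 := by
  rcases Nat.lt_or_ge (r + 2) (n + 1) with hrn | hrn
  · rw [siteVec_apply_site (by omega) (by omega) (by omega) (by omega)]
    congr 1
    simp only [eq_iff_iff]
    omega
  · rw [show r + 2 = n + 1 by omega, site_add_self, siteVec_apply_site (by omega) (by omega)
      le_rfl (by omega), if_neg (by omega), if_neg (by omega)]

theorem clusterPhase_add_siteVec {j : ℕ} (hj : 2 ≤ j) (hjn : j + 1 ≤ n) (v : Fin n → ZMod 2) :
    clusterPhase n (v + siteVec n j)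
      = clusterPhase n v + v (site n (j - 1)) + v (site n (j + 1)) := by
  have hmem : ∀ {r}, r ∈ Finset.range n → r < n := Finset.mem_range.1
  have left : ∑ r ∈ Finset.range n, v (site n (r + 1)) * siteVec n j (site n (r + 2))
      = v (site n (j - 1)) := by
    rw [Finset.sum_eq_single (j - 2) (fun r hr hne => by
        rw [siteVec_apply_site_add_two hj hjn (hmem hr), if_neg hne, mul_zero])
        (fun h => absurd (Finset.mem_range.2 (by omega)) h),
      siteVec_apply_site_add_two hj hjn (by omega), if_pos rfl, mul_one,
      show j - 2 + 1 = j - 1 by omega]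
  have right : ∑ r ∈ Finset.range n, siteVec n j (site n (r + 1)) * v (site n (r + 2))
      = v (site n (j + 1)) := by
    rw [Finset.sum_eq_single (j - 1) (fun r hr hne => by
        rw [siteVec_apply_site_add_one (by omega) (by omega) (hmem hr), if_neg hne, zero_mul])
        (fun h => absurd (Finset.mem_range.2 (by omega)) h),
      siteVec_apply_site_add_one (by omega) (by omega) (by omega), if_pos rfl, one_mul,
      show j - 1 + 2 = j + 1 by omega]
  have both : ∑ r ∈ Finset.range n, siteVec n j (site n (r + 1)) * siteVec n j (site n (r + 2))
      = 0 := by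
    refine Finset.sum_eq_zero fun r hr => ?_
    rw [siteVec_apply_site_add_one (by omega) (by omega) (hmem hr),
      siteVec_apply_site_add_two hj hjn (hmem hr)]
    split_ifs <;> first | omega | simp
  simp only [clusterPhase, Pi.add_apply, add_mul, mul_add, Finset.sum_add_distrib, left, right,
    both]
  ring

theorem Kstab_mem_mulVecStabilizer_cluster {j : ℕ} (hj : 2 ≤ j) (hjn : j + 1 ≤ n) :
    Kstab n j ∈ mulVecStabilizer (cluster n) := by
  rw [Kstab_eq hj (by omega)]
  refine pauliString_mem_mulVecStabilizer_cluster fun v => ?_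
  rw [clusterPhase_add_siteVec hj hjn, dotProduct_add, add_dotProduct, add_dotProduct,
    siteVec_dotProduct, siteVec_dotProduct, siteVec_dotProduct, siteVec_dotProduct,
    siteVec_apply_site (by omega) (by omega) (by omega) (by omega),
    siteVec_apply_site (k := j + 1) (by omega) (by omega) (by omega) (by omega),
    if_neg (by omega), if_neg (by omega)]
  grind

end Cluster

theorem SOP_eq_product_of_stabilizers_general (n : ℕ) [NeZero n] (p q : ℕ)
    (hp : 1 ≤ p) (hpq : p < q) (hq : q ≤ n / 2) (g : G2) :
    SOPm n p q g
      = ((List.range (2 * (q - p))).map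
          (fun i => Kstab n (2 * p + i)
            ^ (if (2 * p + i) % 2 = 1 then g.1.val else g.2.val))).prod ∧
    (SOPm n p q g).mulVec (cluster n) = cluster n := by
  have hprod := SOPm_eq_prod_Kstab hp hpq (by omega : 2 * q ≤ n) g
  refine ⟨hprod, mem_mulVecStabilizer.1 ?_⟩
  rw [hprod]
  refine Submonoid.list_prod_mem _ fun A hA => ?_
  obtain ⟨i, hi, rfl⟩ := List.mem_map.1 hA
  rw [List.mem_range] at hi
  exact pow_mem (Kstab_mem_mulVecStabilizer_cluster (by omega) (by omega)) _

/-- The string order parameter factorizes as an ordered product of cluster stabilizers: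
`S_{[p,q]}(g) = ∏_{j=2p}^{2q−1} K_j^{s_j}` with `s_j = a` for odd `j` and `s_j = b` for even
`j`; in particular `S_{[p,q]}(g)|C_n⟩ = |C_n⟩`. -/
theorem SOP_eq_product_of_stabilizers (n : ℕ) [NeZero n] (hn : Even n) (p q : ℕ)
    (hp : 1 ≤ p) (hpq : p < q) (hq : q ≤ n / 2) (g : G2) :
    SOPm n p q g
      = ((List.range (2 * (q - p))).map
          (fun i => Kstab n (2 * p + i)
            ^ (if (2 * p + i) % 2 = 1 then g.1.val else g.2.val))).prod ∧
    (SOPm n p q g).mulVec (cluster n) = cluster n :=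
  SOP_eq_product_of_stabilizers_general n p q hp hpq hq g
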